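/- Let (L^c_1, …, L^c_n, L_1, …, L_m) be an exchangeable family of real-valued random variables (ties allowed), where n, m ≥ 1, let β ∈ (0,1] and α ∈ (0,1). Suppose there exists k ∈ {1,…,n} with a(k) ≤ α, and set k* = min{k ∈ {1,…,n} : a(k) ≤ α}. Then Pr[L_{(⌈mβ⌉)} > L^c_{(k*)}] ≤ α, where L^c_{(1)} ≤ … ≤ L^c_{(n)} are the order statistics of the first n variables and L_{(1)} ≤ … ≤ L_{(m)} those of the last m variables. -/

import Mathlib

open MeasureTheory

/-- The `i`-th order statistic (0-indexed) of the finite tuple `f : Fin N → ℝ`. -/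
noncomputable def orderStat {N : ℕ} (f : Fin N → ℝ) (i : Fin N) : ℝ := f (Tuple.sort f i)

/-- For `k ∈ {1,…,n+1}`, `a(k) = Σ_{j=k}^{n+1} C(n−j+m−⌈mβ⌉, n−j)·C(j+⌈mβ⌉−1, j) / C(n+m, m)`,
with the convention `C(b, r) = 0` for `r < 0`: the `j = n+1` term vanishes, so the sum is taken
over `k ≤ j ≤ n`. -/
noncomputable def aFun (n m : ℕ) (β : ℝ) (k : ℕ) : ℝ :=
  ∑ j ∈ Finset.Icc k n,
    (Nat.choose (n - j + m - ⌈(m : ℝ) * β⌉₊) (n - j)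
        * Nat.choose (j + ⌈(m : ℝ) * β⌉₊ - 1) j : ℝ)
      / Nat.choose (n + m) m

open Finset
open scoped Classical ENNReal

lemma card_filter_comp_perm {M : ℕ} (σ : Equiv.Perm (Fin M)) (p : Fin M → Prop) [DecidablePred p] :
    (Finset.univ.filter fun j => p (σ j)).card = (Finset.univ.filter p).card := by
  apply Finset.card_bij (fun a _ => σ a)
  · intro a ha; simp only [mem_filter, mem_univ, true_and] at ha ⊢; exact ha
  · intro a _ b _ h; exact σ.injective h
  · intro b hb; exact ⟨σ.symm b, by simpa using hb, by simp⟩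

lemma orderStat_pred_iff {M : ℕ} (f : Fin M → ℝ) (i : Fin M) (P : ℝ → Prop) [DecidablePred P]
    (hP : ∀ x y : ℝ, x ≤ y → P y → P x) :
    P (orderStat f i) ↔ (i : ℕ) + 1 ≤ (Finset.univ.filter fun j => P (f j)).card := by
  set g : Fin M → ℝ := f ∘ Tuple.sort f with hg
  have hmono : Monotone g := Tuple.monotone_sort f
  have hcard : (Finset.univ.filter fun j => P (f j)).card
      = (Finset.univ.filter fun j => P (g j)).card :=
    (card_filter_comp_perm (Tuple.sort f) (fun j => P (f j))).symm
  have : orderStat f i = g i := rfl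
  rw [this, hcard]
  constructor
  · intro h
    calc (i:ℕ) + 1 = (Finset.Iic i).card := by rw [Fin.card_Iic]
    _ ≤ _ := by
        apply Finset.card_le_card
        intro j hj
        simp only [mem_Iic] at hj
        simp only [mem_filter, mem_univ, true_and]
        exact hP _ _ (hmono hj) h
  · intro h
    by_contra hc
    have hsub : (Finset.univ.filter fun j => P (g j)) ⊆ Finset.Iio i := by
      intro j hj
      simp only [mem_filter, mem_univ, true_and] at hj
      simp only [mem_Iio]
      by_contra hji
      exact hc (hP _ _ (hmono (not_lt.1 hji)) hj)
    have := Finset.card_le_card hsub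
    rw [Fin.card_Iio] at this
    omega

lemma orderStat_le_iff {M : ℕ} (f : Fin M → ℝ) (i : Fin M) (t : ℝ) :
    orderStat f i ≤ t ↔ (i : ℕ) + 1 ≤ (Finset.univ.filter fun j => f j ≤ t).card :=
  orderStat_pred_iff f i (· ≤ t) (fun _ _ h h' => h.trans h')

lemma orderStat_lt_iff {M : ℕ} (f : Fin M → ℝ) (i : Fin M) (t : ℝ) :
    orderStat f i < t ↔ (i : ℕ) + 1 ≤ (Finset.univ.filter fun j => f j < t).card :=
  orderStat_pred_iff f i (· < t) (fun _ _ h h' => h.trans_lt h')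

def Ev (n m : ℕ) (kk : Fin n) (rr : Fin m) (u : Fin (n+m) → ℝ) : Prop :=
  orderStat (fun a => u (Fin.castAdd m a)) kk < orderStat (fun b => u (Fin.natAdd n b)) rr

lemma ev_transfer {n m : ℕ} (kk : Fin n) (rr : Fin m) (u u' : Fin (n+m) → ℝ)
    (H : ∀ a b, u a < u b → u' a < u' b) (h : Ev n m kk rr u) : Ev n m kk rr u' := by
  set f : Fin n → ℝ := fun a => u (Fin.castAdd m a)
  set g : Fin m → ℝ := fun b => u (Fin.natAdd n b)
  set f' : Fin n → ℝ := fun a => u' (Fin.castAdd m a)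
  set g' : Fin m → ℝ := fun b => u' (Fin.natAdd n b)
  set j1 : Fin m := Tuple.sort g' rr with hj1
  have ht' : orderStat g' rr = g' j1 := rfl
  -- step 1 : orderStat g rr ≤ g j1
  have h1 : (rr : ℕ) + 1 ≤ (Finset.univ.filter fun b => g' b ≤ g' j1).card :=
    (orderStat_le_iff g' rr (g' j1)).1 (le_of_eq ht')
  have hsub1 : (Finset.univ.filter fun b => g' b ≤ g' j1)
      ⊆ (Finset.univ.filter fun b => g b ≤ g j1) := by
    intro b hb
    simp only [mem_filter, mem_univ, true_and] at hb ⊢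
    by_contra hc
    exact absurd (H _ _ (not_le.1 hc)) (not_lt.2 hb)
  have h2 : orderStat g rr ≤ g j1 :=
    (orderStat_le_iff g rr (g j1)).2 (h1.trans (Finset.card_le_card hsub1))
  -- step 2 : transfer the strict count
  have h3 : (kk : ℕ) + 1 ≤ (Finset.univ.filter fun a => f a < orderStat g rr).card :=
    (orderStat_lt_iff f kk _).1 h
  have hsub2 : (Finset.univ.filter fun a => f a < orderStat g rr)
      ⊆ (Finset.univ.filter fun a => f' a < g' j1) := by
    intro a ha
    simp only [mem_filter, mem_univ, true_and] at ha ⊢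
    exact H _ _ (lt_of_lt_of_le ha h2)
  have h4 : orderStat f' kk < g' j1 :=
    (orderStat_lt_iff f' kk _).2 (h3.trans (Finset.card_le_card hsub2))
  rw [Ev, ht']
  exact h4

noncomputable def tie {M : ℕ} (w : Fin M → ℝ) (i : Fin M) : ℝ :=
  ((M * (Finset.univ.filter fun j => w j < w i).card + (i : ℕ) : ℕ) : ℝ)

lemma tie_card_lt {M : ℕ} (w : Fin M → ℝ) {a b : Fin M} (hab : w a < w b) :
    (Finset.univ.filter fun j => w j < w a).card + 1
      ≤ (Finset.univ.filter fun j => w j < w b).card := by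
  have hss : (Finset.univ.filter fun j => w j < w a)
      ⊂ (Finset.univ.filter fun j => w j < w b) := by
    constructor
    · intro j hj
      simp only [mem_filter, mem_univ, true_and] at hj ⊢
      exact hj.trans hab
    · intro hsub
      have := hsub (by simp [hab] : a ∈ Finset.univ.filter fun j => w j < w b)
      simp at this
  exact Finset.card_lt_card hss

lemma tie_lt {M : ℕ} (w : Fin M → ℝ) : ∀ a b, w a < w b → tie w a < tie w b := by
  intro a b hab
  have h1 := tie_card_lt w hab
  have h2 : (a : ℕ) < M := a.isLt
  rw [tie, tie, Nat.cast_lt]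
  calc M * (Finset.univ.filter fun j => w j < w a).card + (a : ℕ)
      < M * ((Finset.univ.filter fun j => w j < w a).card + 1) + 0 := by
        rw [Nat.mul_add, Nat.mul_one]; omega
    _ ≤ M * (Finset.univ.filter fun j => w j < w b).card + (b : ℕ) :=
        Nat.add_le_add (Nat.mul_le_mul_left _ h1) (Nat.zero_le _)

lemma tie_inj {M : ℕ} (w : Fin M → ℝ) : Function.Injective (tie w) := by
  intro a b hab
  rcases lt_trichotomy (w a) (w b) with h | h | h
  · exact absurd hab (ne_of_lt (tie_lt w a b h))
  · have hfil : (Finset.univ.filter fun j => w j < w a)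
        = (Finset.univ.filter fun j => w j < w b) := by rw [h]
    rw [tie, tie, Nat.cast_inj, hfil] at hab
    exact Fin.ext (by omega)
  · exact absurd hab.symm (ne_of_lt (tie_lt w b a h))

def CondF {n m : ℕ} (kk : Fin n) (rr : Fin m) (T : Finset (Fin (n+m))) : Prop :=
  ∃ p ∈ T, (T.filter fun y => y < p).card = (rr : ℕ) ∧ (kk : ℕ) + (rr : ℕ) + 1 ≤ (p : ℕ)

def testSet {n m : ℕ} (σ : Equiv.Perm (Fin (n+m))) : Finset (Fin (n+m)) :=
  Finset.univ.image fun b : Fin m => σ (Fin.natAdd n b)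

lemma natAdd_inj {n m : ℕ} (σ : Equiv.Perm (Fin (n+m))) :
    Function.Injective fun b : Fin m => σ (Fin.natAdd n b) := by
  intro a b h
  have := σ.injective h
  have h2 : (Fin.natAdd n a : Fin (n+m)).val = (Fin.natAdd n b).val := by rw [this]
  simp [Fin.natAdd] at h2
  exact Fin.ext h2

lemma castAdd_inj {n m : ℕ} (σ : Equiv.Perm (Fin (n+m))) :
    Function.Injective fun a : Fin n => σ (Fin.castAdd m a) := by
  intro a b h
  have := σ.injective h
  have h2 : (Fin.castAdd m a : Fin (n+m)).val = (Fin.castAdd m b).val := by rw [this]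
  simp [Fin.castAdd] at h2
  exact Fin.ext h2

lemma card_filter_fin_add {n m : ℕ} (P : Fin (n+m) → Prop) [DecidablePred P] :
    (Finset.univ.filter P).card
      = (Finset.univ.filter fun a : Fin n => P (Fin.castAdd m a)).card
        + (Finset.univ.filter fun b : Fin m => P (Fin.natAdd n b)).card := by
  have huniv : (Finset.univ : Finset (Fin (n+m)))
      = (Finset.univ.image (Fin.castAdd m)) ∪ (Finset.univ.image (Fin.natAdd n)) := by
    ext i
    simp only [mem_univ, true_iff, mem_union, mem_image]
    by_cases h : (i : ℕ) < n
    · exact Or.inl ⟨⟨i, h⟩, trivial, Fin.ext rfl⟩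
    · exact Or.inr ⟨⟨(i : ℕ) - n, by omega⟩, trivial, Fin.ext (by simp only [Fin.natAdd_mk]; omega)⟩
  have hdisj : Disjoint ((Finset.univ.image (Fin.castAdd m)).filter P)
      ((Finset.univ.image (Fin.natAdd n)).filter P) := by
    rw [Finset.disjoint_left]
    intro x hx hy
    simp only [mem_filter, mem_image] at hx hy
    obtain ⟨⟨a, _, ha⟩, _⟩ := hx
    obtain ⟨⟨b, _, hb⟩, _⟩ := hy
    have : (x : ℕ) < n := ha ▸ a.isLt
    have : n ≤ (x : ℕ) := hb ▸ Nat.le_add_right n b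
    omega
  rw [huniv, Finset.filter_union, Finset.card_union_of_disjoint hdisj,
    Finset.filter_image, Finset.filter_image,
    Finset.card_image_of_injective _ (Fin.castAdd_injective _ _),
    Finset.card_image_of_injective _ (fun a b h => Fin.ext
      (by have := congrArg Fin.val h; simpa [Fin.natAdd] using this) : Function.Injective (Fin.natAdd n (m := m)))]

lemma split_count {n m : ℕ} (σ : Equiv.Perm (Fin (n+m))) (p : Fin (n+m)) :
    (p : ℕ) = ((testSet σ).filter fun y => y < p).card
      + (Finset.univ.filter fun a : Fin n => σ (Fin.castAdd m a) < p).card := by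
  have h1 : ((Finset.univ : Finset (Fin (n+m))).filter fun x => x < p).card = (p : ℕ) := by
    have : (Finset.univ.filter fun x : Fin (n+m) => x < p) = Finset.Iio p := by
      ext x; simp
    rw [this, Fin.card_Iio]
  have h2 := card_filter_comp_perm σ (fun x => x < p)
  have h3 := card_filter_fin_add (n := n) (m := m) (fun i => σ i < p)
  have h4 : ((testSet σ).filter fun y => y < p).card
      = (Finset.univ.filter fun b : Fin m => σ (Fin.natAdd n b) < p).card := by
    rw [testSet, Finset.filter_image,
      Finset.card_image_of_injective _ (natAdd_inj σ)]
  omega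

lemma ev_iff_cond {n m : ℕ} (kk : Fin n) (rr : Fin m) (v : Fin (n + m) → ℝ)
    (hv : StrictMono v) (σ : Equiv.Perm (Fin (n + m))) :
    Ev n m kk rr (v ∘ σ) ↔ CondF kk rr (testSet σ) := by
  set f : Fin n → ℝ := fun a => v (σ (Fin.castAdd m a)) with hf
  set g : Fin m → ℝ := fun b => v (σ (Fin.natAdd n b)) with hg
  have hginj : Function.Injective g := hv.injective.comp (natAdd_inj σ)
  have hTlt : ∀ p : Fin (n+m), ((testSet σ).filter fun y => y < p).card
      = (Finset.univ.filter fun b => g b < v p).card := by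
    intro p
    rw [testSet, Finset.filter_image, Finset.card_image_of_injective _ (natAdd_inj σ)]
    congr 1
    apply Finset.filter_congr
    intro b _
    simp only [hg, hv.lt_iff_lt]
  have hCa : ∀ p : Fin (n+m), (Finset.univ.filter fun a : Fin n => σ (Fin.castAdd m a) < p).card
      = (Finset.univ.filter fun a => f a < v p).card := by
    intro p
    apply Finset.card_bij (fun a _ => a) ?_ (fun _ _ _ _ h => h) (fun a ha => ⟨a, ?_, rfl⟩)
    · intro a ha
      simp only [mem_filter, mem_univ, true_and] at ha ⊢
      exact hv ha
    · simp only [mem_filter, mem_univ, true_and] at ha ⊢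
      exact hv.lt_iff_lt.1 ha
  have hEv : Ev n m kk rr (v ∘ ⇑σ) ↔ orderStat f kk < orderStat g rr := Iff.rfl
  rw [hEv]
  constructor
  · intro h
    set j0 : Fin m := Tuple.sort g rr with hj0
    set p : Fin (n+m) := σ (Fin.natAdd n j0) with hp
    have hpT : p ∈ testSet σ := Finset.mem_image_of_mem _ (Finset.mem_univ j0)
    have hgj0 : orderStat g rr = g j0 := rfl
    have hle : (rr : ℕ) + 1 ≤ (Finset.univ.filter fun b => g b ≤ g j0).card :=
      (orderStat_le_iff g rr _).1 (le_of_eq hgj0)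
    have hltub : (Finset.univ.filter fun b => g b < g j0).card ≤ (rr : ℕ) := by
      by_contra hc
      push_neg at hc
      have := (orderStat_lt_iff g rr (g j0)).2 hc
      rw [hgj0] at this
      exact lt_irrefl _ this
    have hsubset : (Finset.univ.filter fun b => g b ≤ g j0)
        ⊆ insert j0 (Finset.univ.filter fun b => g b < g j0) := by
      intro b hb
      simp only [mem_filter, mem_univ, true_and, Finset.mem_insert] at hb ⊢
      rcases lt_or_eq_of_le hb with h' | h'
      · exact Or.inr h'
      · exact Or.inl (hginj h')
    have hltlb : (rr : ℕ) ≤ (Finset.univ.filter fun b => g b < g j0).card := by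
      have h5 := (Finset.card_le_card hsubset).trans (Finset.card_insert_le _ _)
      omega
    have hcount : (Finset.univ.filter fun b => g b < g j0).card = (rr : ℕ) :=
      le_antisymm hltub hltlb
    have hT : ((testSet σ).filter fun y => y < p).card = (rr : ℕ) := by
      rw [hTlt p]; exact hcount
    have hev2 : (kk : ℕ) + 1 ≤ (Finset.univ.filter fun a => f a < v p).card := by
      have := (orderStat_lt_iff f kk _).1 h
      rwa [hgj0] at this
    have hsplit := split_count σ p
    rw [hT, hCa p] at hsplit
    exact ⟨p, hpT, hT, by omega⟩
  · rintro ⟨p, hpT, hcnt, hpos⟩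
    obtain ⟨b0, -, hb0⟩ := Finset.mem_image.1 hpT
    have hgb0 : g b0 = v p := by rw [hg]; simp only [hb0]
    have hlt : (Finset.univ.filter fun b => g b < v p).card = (rr : ℕ) := by
      rw [← hTlt p]; exact hcnt
    have hub : ¬ orderStat g rr < v p := by
      intro hc
      have := (orderStat_lt_iff g rr _).1 hc
      omega
    have hlb : orderStat g rr ≤ v p := by
      apply (orderStat_le_iff g rr _).2
      have hb0notin : b0 ∉ (Finset.univ.filter fun b => g b < v p) := by
        simp only [mem_filter, mem_univ, true_and, hgb0]
        exact lt_irrefl _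
      have hins : insert b0 (Finset.univ.filter fun b => g b < v p)
          ⊆ (Finset.univ.filter fun b => g b ≤ v p) := by
        intro b hb
        rcases Finset.mem_insert.1 hb with h' | h'
        · simp only [h', mem_filter, mem_univ, true_and, hgb0, le_refl]
        · simp only [mem_filter, mem_univ, true_and] at h' ⊢
          exact le_of_lt h'
      have := Finset.card_le_card hins
      rw [Finset.card_insert_of_notMem hb0notin, hlt] at this
      omega
    have heq : orderStat g rr = v p := le_antisymm hlb (not_lt.1 hub)
    have hsplit := split_count σ p
    rw [hcnt, hCa p] at hsplit
    have hkk : (kk : ℕ) + 1 ≤ (Finset.univ.filter fun a => f a < v p).card := by omega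
    have := (orderStat_lt_iff f kk (v p)).2 hkk
    show orderStat f kk < orderStat g rr
    rw [heq]
    exact this

lemma card_filter_val_lt {N c : ℕ} (h : c < N) :
    ((Finset.univ : Finset (Fin N)).filter fun x : Fin N => (x : ℕ) < c).card = c := by
  have : ((Finset.univ : Finset (Fin N)).filter fun x : Fin N => (x : ℕ) < c) = Finset.Iio (⟨c, h⟩ : Fin N) := by
    ext x
    simp [Fin.lt_def]
  rw [this, Fin.card_Iio]

lemma card_filter_val_gt {N c : ℕ} (h : c < N) :
    ((Finset.univ : Finset (Fin N)).filter fun x : Fin N => c < (x : ℕ)).card = N - 1 - c := by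
  have : ((Finset.univ : Finset (Fin N)).filter fun x : Fin N => c < (x : ℕ)) = Finset.Ioi (⟨c, h⟩ : Fin N) := by
    ext x
    simp [Fin.lt_def]
  rw [this, Fin.card_Ioi]

lemma cond_count (n m : ℕ) (kk : Fin n) (rr : Fin m) :
    (((Finset.univ : Finset (Fin (n+m))).powersetCard m).filter (CondF kk rr)).card
      ≤ ∑ j ∈ Finset.Icc ((kk : ℕ) + 1) n,
          (j + (rr : ℕ)).choose (rr : ℕ)
            * (n + m - 1 - j - (rr : ℕ)).choose (m - 1 - (rr : ℕ)) := by
  set s : Finset ((_ : ℕ) × (Finset (Fin (n+m)) × Finset (Fin (n+m)))) :=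
    (Finset.Icc ((kk : ℕ) + 1) n).sigma (fun j =>
      (((Finset.univ : Finset (Fin (n+m))).filter fun x : Fin (n+m) => (x : ℕ) < j + (rr : ℕ)).powersetCard (rr : ℕ))
        ×ˢ (((Finset.univ : Finset (Fin (n+m))).filter fun x : Fin (n+m) => j + (rr : ℕ) < (x : ℕ)).powersetCard
            (m - 1 - (rr : ℕ)))) with hs
  have hcard : s.card = ∑ j ∈ Finset.Icc ((kk : ℕ) + 1) n,
      (j + (rr : ℕ)).choose (rr : ℕ) * (n + m - 1 - j - (rr : ℕ)).choose (m - 1 - (rr : ℕ)) := by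
    rw [hs, Finset.card_sigma]
    apply Finset.sum_congr rfl
    intro j hj
    rw [Finset.mem_Icc] at hj
    have h1 : j + (rr : ℕ) < n + m := by have := rr.isLt; omega
    rw [Finset.card_product, Finset.card_powersetCard, Finset.card_powersetCard,
      card_filter_val_lt h1, card_filter_val_gt h1]
    have h2 : n + m - 1 - (j + (rr : ℕ)) = n + m - 1 - j - (rr : ℕ) := by omega
    rw [h2]
  rw [← hcard]
  apply Finset.card_le_card_of_surjOn
    (fun t => t.2.1 ∪ t.2.2 ∪ ((Finset.univ : Finset (Fin (n+m))).filter fun x : Fin (n+m) => (x : ℕ) = t.1 + (rr : ℕ)))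
  intro T hT
  simp only [Finset.coe_filter, Set.mem_setOf_eq, Finset.mem_powersetCard] at hT
  obtain ⟨⟨-, hTcard⟩, p, hpT, hcnt, hpos⟩ := hT
  have hrrp : (rr : ℕ) ≤ (p : ℕ) := by omega
  set j : ℕ := (p : ℕ) - (rr : ℕ) with hj
  have hpj : (p : ℕ) = j + (rr : ℕ) := by omega
  set A : Finset (Fin (n+m)) := T.filter fun y => y < p with hA
  set B : Finset (Fin (n+m)) := T.filter fun y => p < y with hB
  -- cardinality of B
  have hcntA : A.card = (rr : ℕ) := hcnt
  have hsplit : A.card + (T.filter fun y => ¬ y < p).card = T.card :=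
    Finset.card_filter_add_card_filter_not (s := T) (p := fun y => y < p)
  have hnotlt : (T.filter fun y => ¬ y < p) = insert p B := by
    ext x
    simp only [Finset.mem_filter, Finset.mem_insert, hB, not_lt]
    constructor
    · rintro ⟨hxT, hpx⟩
      rcases lt_or_eq_of_le hpx with h' | h'
      · exact Or.inr ⟨hxT, h'⟩
      · exact Or.inl h'.symm
    · rintro (rfl | ⟨hxT, hpx⟩)
      · exact ⟨hpT, le_refl _⟩
      · exact ⟨hxT, le_of_lt hpx⟩
  have hpB : p ∉ B := by simp [hB]
  have hBcard : B.card = m - 1 - (rr : ℕ) := by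
    rw [hnotlt, Finset.card_insert_of_notMem hpB] at hsplit
    have := rr.isLt
    omega
  -- B is inside the upper interval, bounding j ≤ n
  have hBsub : B ⊆ (Finset.univ : Finset (Fin (n+m))).filter fun x : Fin (n+m) => j + (rr : ℕ) < (x : ℕ) := by
    intro x hx
    simp only [hB, Finset.mem_filter] at hx
    simp only [Finset.mem_filter, Finset.mem_univ, true_and, ← hpj]
    exact hx.2
  have hjn : j ≤ n := by
    have h2 := Finset.card_le_card hBsub
    have h3 : p.val < n + m := p.isLt
    rw [hBcard, card_filter_val_gt (by omega : j + (rr : ℕ) < n + m)] at h2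
    have := rr.isLt
    omega
  refine ⟨⟨j, (A, B)⟩, ?_, ?_⟩
  · simp only [hs, Finset.mem_coe, Finset.mem_sigma, Finset.mem_Icc, Finset.mem_product,
      Finset.mem_powersetCard]
    refine ⟨⟨by omega, hjn⟩, ⟨?_, hcnt⟩, ⟨hBsub, hBcard⟩⟩
    intro x hx
    simp only [hA, Finset.mem_filter] at hx
    simp only [Finset.mem_filter, Finset.mem_univ, true_and, ← hpj]
    exact hx.2
  · -- f t = T
    have hfp : ((Finset.univ : Finset (Fin (n+m))).filter fun x : Fin (n+m) => (x : ℕ) = j + (rr : ℕ)) = {p} := by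
      ext x
      simp only [Finset.mem_filter, Finset.mem_univ, true_and, Finset.mem_singleton, ← hpj,
        Fin.ext_iff]
    show A ∪ B ∪ _ = T
    rw [hfp]
    ext x
    simp only [Finset.mem_union, Finset.mem_singleton, hA, hB, Finset.mem_filter]
    constructor
    · rintro ((⟨h1, -⟩ | ⟨h1, -⟩) | rfl)
      · exact h1
      · exact h1
      · exact hpT
    · intro hxT
      rcases lt_trichotomy x p with h' | h' | h'
      · exact Or.inl (Or.inl ⟨hxT, h'⟩)
      · exact Or.inr h'
      · exact Or.inl (Or.inr ⟨hxT, h'⟩)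

lemma fiber_bound {n m : ℕ} (T : Finset (Fin (n+m))) (hT : T.card = m) :
    ((Finset.univ : Finset (Equiv.Perm (Fin (n+m)))).filter fun σ => testSet σ = T).card
      ≤ m.factorial * n.factorial := by
  have hTc : Tᶜ.card = n := by
    rw [Finset.card_compl, hT]
    simp
  set eT := T.orderIsoOfFin hT with heT
  set eC := Tᶜ.orderIsoOfFin hTc with heC
  set Φ : Equiv.Perm (Fin (n+m)) → (Fin m ↪ Fin m) × (Fin n ↪ Fin n) := fun σ =>
    if h : testSet σ = T then
      (⟨fun b => eT.symm ⟨σ (Fin.natAdd n b), by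
          rw [← h]; exact Finset.mem_image_of_mem _ (Finset.mem_univ b)⟩, by
          intro a b hab
          have := congrArg (fun x => (eT x).1) hab
          simp only [OrderIso.apply_symm_apply] at this
          exact natAdd_inj σ this⟩,
       ⟨fun a => eC.symm ⟨σ (Fin.castAdd m a), by
          rw [Finset.mem_compl, ← h]
          intro hc
          obtain ⟨b, -, hb⟩ := Finset.mem_image.1 hc
          have := σ.injective hb
          have h2 : (Fin.natAdd n b : Fin (n+m)).val = (Fin.castAdd m a).val := by rw [this]
          simp [Fin.natAdd, Fin.castAdd] at h2
          have := a.isLt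
          omega⟩, by
          intro a b hab
          have := congrArg (fun x => (eC x).1) hab
          simp only [OrderIso.apply_symm_apply] at this
          have h3 : (Fin.castAdd m a : Fin (n+m)) = Fin.castAdd m b := σ.injective this
          have h4 := congrArg Fin.val h3
          simp [Fin.castAdd] at h4
          exact Fin.ext h4⟩)
    else (Function.Embedding.refl _, Function.Embedding.refl _) with hΦ
  have hinj : Set.InjOn Φ ((Finset.univ : Finset (Equiv.Perm (Fin (n+m)))).filter
      fun σ => testSet σ = T) := by
    intro σ hσ σ' hσ' heq
    simp only [Finset.coe_filter, Set.mem_setOf_eq, Finset.mem_univ, true_and] at hσ hσ'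
    rw [hΦ] at heq
    simp only [hσ, hσ', dif_pos] at heq
    obtain ⟨h1, h2⟩ := Prod.mk.injEq .. ▸ heq
    have hnat : ∀ b : Fin m, σ (Fin.natAdd n b) = σ' (Fin.natAdd n b) := by
      intro b
      have := congrArg (fun e : Fin m ↪ Fin m => (eT (e b)).1) h1
      change (eT (eT.symm ⟨σ (Fin.natAdd n b), _⟩)).1 = (eT (eT.symm ⟨σ' (Fin.natAdd n b), _⟩)).1 at this
      simpa only [OrderIso.apply_symm_apply] using this
    have hcast : ∀ a : Fin n, σ (Fin.castAdd m a) = σ' (Fin.castAdd m a) := by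
      intro a
      have := congrArg (fun e : Fin n ↪ Fin n => (eC (e a)).1) h2
      change (eC (eC.symm ⟨σ (Fin.castAdd m a), _⟩)).1 = (eC (eC.symm ⟨σ' (Fin.castAdd m a), _⟩)).1 at this
      simpa only [OrderIso.apply_symm_apply] using this
    apply Equiv.ext
    intro i
    refine Fin.addCases (motive := fun i => σ i = σ' i) ?_ ?_ i
    · exact hcast
    · exact hnat
  have hle := Finset.card_le_card_of_injOn Φ (fun a _ => Finset.mem_univ (Φ a)) hinj
  calc _ ≤ (Finset.univ : Finset ((Fin m ↪ Fin m) × (Fin n ↪ Fin n))).card := hle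
  _ = m.factorial * n.factorial := by
      rw [Finset.card_univ, Fintype.card_prod, Fintype.card_embedding_eq, Fintype.card_embedding_eq]
      simp [Nat.descFactorial_self]

lemma det_bound (n m : ℕ) (kk : Fin n) (rr : Fin m) (u : Fin (n+m) → ℝ) :
    ((Finset.univ : Finset (Equiv.Perm (Fin (n+m)))).filter
        fun σ : Equiv.Perm (Fin (n+m)) => Ev n m kk rr (u ∘ ⇑σ)).card
      ≤ m.factorial * n.factorial * ∑ j ∈ Finset.Icc ((kk : ℕ) + 1) n,
          (j + (rr : ℕ)).choose (rr : ℕ)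
            * (n + m - 1 - j - (rr : ℕ)).choose (m - 1 - (rr : ℕ)) := by
  set u' : Fin (n+m) → ℝ := tie u with hu'
  -- step 0 : pass to tie-broken values
  have hstep0 : ((Finset.univ : Finset (Equiv.Perm (Fin (n+m)))).filter
        fun σ : Equiv.Perm (Fin (n+m)) => Ev n m kk rr (u ∘ ⇑σ)).card
      ≤ ((Finset.univ : Finset (Equiv.Perm (Fin (n+m)))).filter
        fun σ : Equiv.Perm (Fin (n+m)) => Ev n m kk rr (u' ∘ ⇑σ)).card := by
    apply Finset.card_le_card
    intro σ hσ
    simp only [Finset.mem_filter, Finset.mem_univ, true_and] at hσ ⊢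
    exact ev_transfer kk rr (u ∘ σ) (u' ∘ σ) (fun a b h => tie_lt u _ _ h) hσ
  -- step 1 : sort to get a strictly monotone tuple
  set ρ : Equiv.Perm (Fin (n+m)) := Tuple.sort u' with hρ
  set v : Fin (n+m) → ℝ := u' ∘ ρ with hv
  have hvmono : StrictMono v :=
    (Tuple.monotone_sort u').strictMono_of_injective ((tie_inj u).comp ρ.injective)
  have hstep1 : ((Finset.univ : Finset (Equiv.Perm (Fin (n+m)))).filter
        fun σ : Equiv.Perm (Fin (n+m)) => Ev n m kk rr (u' ∘ ⇑σ)).card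
      = ((Finset.univ : Finset (Equiv.Perm (Fin (n+m)))).filter
        fun σ : Equiv.Perm (Fin (n+m)) => Ev n m kk rr (v ∘ ⇑σ)).card := by
    apply Finset.card_bij (fun σ _ => σ.trans ρ.symm)
    · intro σ hσ
      simp only [Finset.mem_filter, Finset.mem_univ, true_and] at hσ ⊢
      have hfe : v ∘ ⇑(σ.trans ρ.symm) = u' ∘ ⇑σ :=
        funext fun i => congrArg u' (ρ.apply_symm_apply (σ i))
      rw [hfe]
      exact hσ
    · intro σ _ σ' _ h
      apply Equiv.ext
      intro i
      have := congrArg (fun e : Equiv.Perm (Fin (n+m)) => ρ (e i)) h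
      simpa using this
    · intro τ hτ
      refine ⟨τ.trans ρ, ?_, ?_⟩
      · simp only [Finset.mem_filter, Finset.mem_univ, true_and] at hτ ⊢
        have hfe : u' ∘ ⇑((τ.trans ρ)) = v ∘ ⇑τ := funext fun i => rfl
        rw [hfe]
        exact hτ
      · apply Equiv.ext
        intro i
        simp
  -- step 2 : rewrite by the combinatorial condition
  have hstep2 : ((Finset.univ : Finset (Equiv.Perm (Fin (n+m)))).filter
        fun σ : Equiv.Perm (Fin (n+m)) => Ev n m kk rr (v ∘ ⇑σ)).card
      = ((Finset.univ : Finset (Equiv.Perm (Fin (n+m)))).filter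
        fun σ : Equiv.Perm (Fin (n+m)) => CondF kk rr (testSet σ)).card := by
    congr 1
    apply Finset.filter_congr
    intro σ _
    exact ⟨fun h => (ev_iff_cond kk rr v hvmono σ).1 h, fun h => (ev_iff_cond kk rr v hvmono σ).2 h⟩
  -- step 3 : fiber over the test set
  set t : Finset (Finset (Fin (n+m))) :=
    ((Finset.univ : Finset (Fin (n+m))).powersetCard m).filter (CondF kk rr) with ht
  have hstep3 : ((Finset.univ : Finset (Equiv.Perm (Fin (n+m)))).filter
        fun σ : Equiv.Perm (Fin (n+m)) => CondF kk rr (testSet σ)).card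
      ≤ t.card * (m.factorial * n.factorial) := by
    rw [Finset.card_eq_sum_card_fiberwise (f := testSet) (t := t) ?_]
    · calc ∑ T ∈ t, (((Finset.univ : Finset (Equiv.Perm (Fin (n+m)))).filter
            fun σ : Equiv.Perm (Fin (n+m)) => CondF kk rr (testSet σ)).filter fun σ : Equiv.Perm (Fin (n+m)) => testSet σ = T).card
          ≤ ∑ T ∈ t, m.factorial * n.factorial := by
            apply Finset.sum_le_sum
            intro T hT
            have hTm : T.card = m := by
              rw [ht] at hT
              exact (Finset.mem_powersetCard.1 (Finset.mem_filter.1 hT).1).2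
            refine le_trans (Finset.card_le_card ?_) (fiber_bound T hTm)
            intro σ hσ
            simp only [Finset.mem_filter] at hσ ⊢
            exact ⟨Finset.mem_univ _, hσ.2⟩
      _ = t.card * (m.factorial * n.factorial) := by rw [Finset.sum_const, smul_eq_mul]
    · intro σ hσ
      simp only [Finset.mem_coe, Finset.mem_filter, Finset.mem_univ, true_and] at hσ
      rw [ht]
      refine Finset.mem_filter.2 ⟨Finset.mem_powersetCard.2 ⟨Finset.subset_univ _, ?_⟩, hσ⟩
      rw [testSet, Finset.card_image_of_injective _ (natAdd_inj σ), Finset.card_univ,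
        Fintype.card_fin]
  calc ((Finset.univ : Finset (Equiv.Perm (Fin (n+m)))).filter
        fun σ : Equiv.Perm (Fin (n+m)) => Ev n m kk rr (u ∘ ⇑σ)).card
      ≤ t.card * (m.factorial * n.factorial) := by
        rw [← hstep2, ← hstep1] at hstep3
        exact le_trans hstep0 hstep3
    _ ≤ _ := by
        rw [mul_comm]
        exact Nat.mul_le_mul_left _ (cond_count n m kk rr)

lemma measurable_orderStat_comp {M N : ℕ} (g : Fin M → Fin N) (i : Fin M) :
    Measurable fun f : Fin N → ℝ => orderStat (fun a => f (g a)) i := by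
  apply measurable_of_Iic
  intro t
  have hpre : (fun f : Fin N → ℝ => orderStat (fun a => f (g a)) i) ⁻¹' Set.Iic t
      = (fun f : Fin N → ℝ =>
          ((Finset.univ : Finset (Fin M)).filter fun a : Fin M => f (g a) ≤ t).card)
        ⁻¹' Set.Ici ((i : ℕ) + 1) := by
    ext f
    simp only [Set.mem_preimage, Set.mem_Iic, Set.mem_Ici, orderStat_le_iff]
  rw [hpre]
  have hcnt : Measurable fun f : Fin N → ℝ =>
      ((Finset.univ : Finset (Fin M)).filter fun a : Fin M => f (g a) ≤ t).card := by
    have heq : (fun f : Fin N → ℝ =>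
        ((Finset.univ : Finset (Fin M)).filter fun a : Fin M => f (g a) ≤ t).card)
        = fun f => ∑ a : Fin M, if f (g a) ≤ t then 1 else 0 := by
      funext f
      rw [Finset.card_filter]
    rw [heq]
    apply Finset.measurable_sum
    intro a _
    exact Measurable.ite (measurableSet_le (measurable_pi_apply (g a)) measurable_const)
      measurable_const measurable_const
  exact hcnt measurableSet_Ici

lemma ev_meas (n m : ℕ) (kk : Fin n) (rr : Fin m) :
    MeasurableSet {u : Fin (n+m) → ℝ | Ev n m kk rr u} :=
  measurableSet_lt (measurable_orderStat_comp (Fin.castAdd m) kk)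
    (measurable_orderStat_comp (Fin.natAdd n) rr)


/-- Let `(L^c_1, …, L^c_n, L_1, …, L_m)` be an exchangeable family of real random variables
(ties allowed), `n, m ≥ 1`, `β ∈ (0,1]`, `α ∈ (0,1)`.  If `k*` is the smallest
`k ∈ {1,…,n}` with `a(k) ≤ α` (assumed to exist), then `Pr[L_(⌈mβ⌉) > L^c_(k*)] ≤ α`. -/
theorem lal_guarantee (n m : ℕ) (hn : 1 ≤ n) (hm : 1 ≤ m)
    {Ω : Type*} [MeasurableSpace Ω] (ℙ : Measure Ω) [IsProbabilityMeasure ℙ]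
    (W : Ω → Fin (n + m) → ℝ) (hW : Measurable W)
    (hexch : ∀ σ : Equiv.Perm (Fin (n + m)),
      Measure.map (fun ω => W ω ∘ σ) ℙ = Measure.map W ℙ)
    (β α : ℝ) (hβ0 : 0 < β) (hβ1 : β ≤ 1) (hα0 : 0 < α) (hα1 : α < 1)
    (kstar : ℕ) (hk1 : 1 ≤ kstar) (hkn : kstar ≤ n)
    (hka : aFun n m β kstar ≤ α)
    (hkmin : ∀ k, 1 ≤ k → k ≤ n → aFun n m β k ≤ α → kstar ≤ k) :
    ℙ {ω |
        orderStat (fun a : Fin n => W ω (Fin.castAdd m a)) ⟨kstar - 1, by omega⟩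
          < orderStat (fun b : Fin m => W ω (Fin.natAdd n b))
              ⟨⌈(m : ℝ) * β⌉₊ - 1, by
                have h1 : ⌈(m : ℝ) * β⌉₊ ≤ m :=
                  Nat.ceil_le.mpr (mul_le_of_le_one_right (Nat.cast_nonneg m) hβ1)
                omega⟩}
      ≤ ENNReal.ofReal α := by
  have hrm : ⌈(m : ℝ) * β⌉₊ ≤ m :=
    Nat.ceil_le.mpr (mul_le_of_le_one_right (Nat.cast_nonneg m) hβ1)
  have hr1 : 1 ≤ ⌈(m : ℝ) * β⌉₊ :=
    Nat.one_le_iff_ne_zero.2 (by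
      have : (0 : ℝ) < (m : ℝ) * β := by positivity
      simpa [Nat.ceil_eq_zero, not_le] using (Nat.ceil_pos.2 this).ne')
  set r : ℕ := ⌈(m : ℝ) * β⌉₊ with hrdef
  set kk : Fin n := ⟨kstar - 1, by omega⟩ with hkk
  set rr : Fin m := ⟨r - 1, by omega⟩ with hrr
  set E : Set (Fin (n+m) → ℝ) := {u | Ev n m kk rr u} with hEdef
  have hEm : MeasurableSet E := ev_meas n m kk rr
  have hset : {ω |
        orderStat (fun a : Fin n => W ω (Fin.castAdd m a)) ⟨kstar - 1, by omega⟩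
          < orderStat (fun b : Fin m => W ω (Fin.natAdd n b))
              ⟨⌈(m : ℝ) * β⌉₊ - 1, by omega⟩}
      = W ⁻¹' E := rfl
  rw [hset]
  obtain ⟨c, hc⟩ : ∃ c : ℕ, c = ∑ j ∈ Finset.Icc ((kk : ℕ) + 1) n,
      (j + (rr : ℕ)).choose (rr : ℕ)
        * (n + m - 1 - j - (rr : ℕ)).choose (m - 1 - (rr : ℕ)) := ⟨_, rfl⟩
  -- measurability of the permuted maps
  have hAm : ∀ σ : Equiv.Perm (Fin (n+m)), Measurable fun ω => W ω ∘ ⇑σ := fun σ =>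
    measurable_pi_lambda _ fun i => (measurable_pi_apply (σ i)).comp hW
  have hPA : ∀ σ : Equiv.Perm (Fin (n+m)), ℙ ((fun ω => W ω ∘ ⇑σ) ⁻¹' E) = ℙ (W ⁻¹' E) := by
    intro σ
    rw [← Measure.map_apply (hAm σ) hEm, hexch σ, Measure.map_apply hW hEm]
  -- the key exchangeability bound
  have key : ((n+m).factorial : ℝ≥0∞) * ℙ (W ⁻¹' E)
      ≤ ((m.factorial * n.factorial * c : ℕ) : ℝ≥0∞) := by
    have hsum : ((n+m).factorial : ℝ≥0∞) * ℙ (W ⁻¹' E)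
        = ∑ σ : Equiv.Perm (Fin (n+m)), ℙ ((fun ω => W ω ∘ ⇑σ) ⁻¹' E) := by
      rw [Finset.sum_congr rfl (fun σ _ => hPA σ), Finset.sum_const, Finset.card_univ,
        Fintype.card_perm, Fintype.card_fin, nsmul_eq_mul]
    rw [hsum]
    have hind : ∀ σ : Equiv.Perm (Fin (n+m)), ℙ ((fun ω => W ω ∘ ⇑σ) ⁻¹' E)
        = ∫⁻ ω, Set.indicator ((fun ω => W ω ∘ ⇑σ) ⁻¹' E) 1 ω ∂ℙ := fun σ =>
      (lintegral_indicator_one ((hAm σ) hEm)).symm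
    calc ∑ σ : Equiv.Perm (Fin (n+m)), ℙ ((fun ω => W ω ∘ ⇑σ) ⁻¹' E)
        = ∑ σ : Equiv.Perm (Fin (n+m)),
            ∫⁻ ω, Set.indicator ((fun ω => W ω ∘ ⇑σ) ⁻¹' E) 1 ω ∂ℙ :=
          Finset.sum_congr rfl fun σ _ => hind σ
      _ = ∫⁻ ω, ∑ σ : Equiv.Perm (Fin (n+m)),
            Set.indicator ((fun ω => W ω ∘ ⇑σ) ⁻¹' E) 1 ω ∂ℙ :=
          (lintegral_finset_sum _ (fun σ _ => measurable_one.indicator ((hAm σ) hEm))).symm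
      _ ≤ ∫⁻ _, ((m.factorial * n.factorial * c : ℕ) : ℝ≥0∞) ∂ℙ := by
          apply lintegral_mono
          intro ω
          show (∑ σ : Equiv.Perm (Fin (n+m)),
              Set.indicator ((fun ω' => W ω' ∘ ⇑σ) ⁻¹' E) 1 ω)
            ≤ ((m.factorial * n.factorial * c : ℕ) : ℝ≥0∞)
          have hewn : ∀ σ : Equiv.Perm (Fin (n+m)),
              Set.indicator ((fun ω' => W ω' ∘ ⇑σ) ⁻¹' E) 1 ω
                = if Ev n m kk rr (W ω ∘ ⇑σ) then (1 : ℝ≥0∞) else 0 := by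
            intro σ
            rw [Set.indicator_apply]
            rfl
          rw [Finset.sum_congr rfl fun σ _ => hewn σ, Finset.sum_boole]
          have hdb := det_bound n m kk rr (W ω)
          rw [← hc] at hdb
          exact_mod_cast Nat.cast_le.2 hdb
      _ = ((m.factorial * n.factorial * c : ℕ) : ℝ≥0∞) := by
          rw [lintegral_const, measure_univ, mul_one]
  -- arithmetic : relate c with aFun
  have hkkval : (kk : ℕ) + 1 = kstar := by simp [hkk]; omega
  have hrrval : (rr : ℕ) = r - 1 := rfl
  rw [hkkval, hrrval] at hc
  have hterm : ∀ j ∈ Finset.Icc kstar n,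
      (((j + (r-1)).choose (r-1) * (n + m - 1 - j - (r-1)).choose (m - 1 - (r-1)) : ℕ) : ℝ)
        = ((n - j + m - r).choose (n - j) * (j + r - 1).choose j : ℕ) := by
    intro j hj
    rw [Finset.mem_Icc] at hj
    have e1 : j + (r - 1) = j + r - 1 := by omega
    have e2 : n + m - 1 - j - (r - 1) = n - j + m - r := by omega
    have e3 : m - 1 - (r - 1) = m - r := by omega
    have e4 : (j + r - 1).choose (r - 1) = (j + r - 1).choose j := by
      rw [← Nat.choose_symm (by omega : j ≤ j + r - 1)]
      congr 1
      omega
    have e5 : (n - j + m - r).choose (m - r) = (n - j + m - r).choose (n - j) := by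
      rw [← Nat.choose_symm (by omega : n - j ≤ n - j + m - r)]
      congr 1
      omega
    rw [e1, e2, e3, e4, e5]
    push_cast
    ring
  have hcR : (c : ℝ) = ∑ j ∈ Finset.Icc kstar n,
      ((n - j + m - r).choose (n - j) * (j + r - 1).choose j : ℕ) := by
    rw [hc]
    push_cast
    refine Finset.sum_congr rfl fun j hj => ?_
    have := hterm j hj
    push_cast at this
    exact this
  have hDpos : (0:ℝ) < (((n+m).choose m : ℕ) : ℝ) := by
    exact_mod_cast Nat.choose_pos (Nat.le_add_left m n)
  have hcsum : (c : ℝ) ≤ α * (((n+m).choose m : ℕ) : ℝ) := by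
    have h1 : aFun n m β kstar * (((n+m).choose m : ℕ) : ℝ) = (c : ℝ) := by
      rw [aFun, ← hrdef, ← Finset.sum_div, div_mul_cancel₀ _ hDpos.ne', hcR]
      push_cast
      rfl
    calc (c : ℝ) = aFun n m β kstar * (((n+m).choose m : ℕ) : ℝ) := h1.symm
      _ ≤ α * (((n+m).choose m : ℕ) : ℝ) := mul_le_mul_of_nonneg_right hka hDpos.le
  have hfinal : ((m.factorial * n.factorial * c : ℕ) : ℝ≥0∞)
      ≤ ENNReal.ofReal α * ((n+m).factorial : ℝ≥0∞) := by
    have hR : ((m.factorial * n.factorial * c : ℕ) : ℝ) ≤ α * (((n+m).factorial : ℕ) : ℝ) := by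
      have hfact : ((n+m).choose m * m.factorial * n.factorial : ℕ) = (n+m).factorial := by
        have h2 := Nat.choose_mul_factorial_mul_factorial (Nat.le_add_left m n)
        have e : n + m - m = n := by omega
        rwa [e] at h2
      calc ((m.factorial * n.factorial * c : ℕ) : ℝ)
          = ((m.factorial * n.factorial : ℕ) : ℝ) * (c : ℝ) := by push_cast; ring
        _ ≤ ((m.factorial * n.factorial : ℕ) : ℝ) * (α * (((n+m).choose m : ℕ) : ℝ)) := by
            apply mul_le_mul_of_nonneg_left hcsum (by positivity)
        _ = α * (((n+m).choose m * m.factorial * n.factorial : ℕ) : ℝ) := by push_cast; ring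
        _ = α * (((n+m).factorial : ℕ) : ℝ) := by rw [hfact]
    calc ((m.factorial * n.factorial * c : ℕ) : ℝ≥0∞)
        = ENNReal.ofReal ((m.factorial * n.factorial * c : ℕ) : ℝ) :=
          (ENNReal.ofReal_natCast _).symm
      _ ≤ ENNReal.ofReal (α * (((n+m).factorial : ℕ) : ℝ)) := ENNReal.ofReal_le_ofReal hR
      _ = ENNReal.ofReal α * ENNReal.ofReal (((n+m).factorial : ℕ) : ℝ) :=
          ENNReal.ofReal_mul hα0.le
      _ = ENNReal.ofReal α * ((n+m).factorial : ℝ≥0∞) := by rw [ENNReal.ofReal_natCast]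
  have hNne : (((n+m).factorial : ℕ) : ℝ≥0∞) ≠ 0 := by
    exact_mod_cast (Nat.factorial_pos (n+m)).ne'
  have hNtop : (((n+m).factorial : ℕ) : ℝ≥0∞) ≠ ⊤ := ENNReal.natCast_ne_top _
  rw [← ENNReal.mul_le_mul_iff_left hNne hNtop]
  calc ℙ (W ⁻¹' E) * ((n+m).factorial : ℝ≥0∞)
      = ((n+m).factorial : ℝ≥0∞) * ℙ (W ⁻¹' E) := mul_comm _ _
    _ ≤ ((m.factorial * n.factorial * c : ℕ) : ℝ≥0∞) := key
    _ ≤ ENNReal.ofReal α * ((n+m).factorial : ℝ≥0∞) := hfinal
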